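/- Let k ≥ 2 and a_L ∈ (0,1), a_R < 0 satisfy a_R = −(1 − a_L^{k−1})/((1 − a_L) a_L^{k−2}). Then the skew tent map h(z) = a_L z + 1 (z ≤ 0), a_R z + 1 (z ≥ 0) satisfies h^k(0) = 0. -/

import Mathlib

/-!
On `z ≤ 0` the map is the affine contraction `z ↦ a_L z + 1` with fixed point `p = 1/(1 - a_L)`,
so as long as the orbit stays in `z ≤ 0` it satisfies `h^i z - p = a_L^i (z - p)`.
After `0 ↦ 1 ↦ a_R + 1`, the boundary relation says exactly `a_R + 1 - p = -p / a_L^(k-2)`,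
so `h^(i+2) 0 = p (1 - a_L^i / a_L^(k-2))`: this is `≤ 0` for `i ≤ k - 2` and vanishes at `i = k - 2`.
-/

/-- The skew tent map h(z) = a_L z + 1 (z ≤ 0), a_R z + 1 (z ≥ 0). -/
noncomputable def stm (aL aR : ℝ) : ℝ → ℝ :=
  fun z => if z ≤ 0 then aL * z + 1 else aR * z + 1

section SkewTent

variable {aL aR : ℝ}

theorem stm_of_nonpos {z : ℝ} (hz : z ≤ 0) : stm aL aR z = aL * z + 1 :=
  if_pos hz

theorem stm_iterate_two_zero : (stm aL aR)^[2] 0 = aR + 1 := by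
  simp [stm]

theorem stm_iterate_of_left_branch (haL : aL ≠ 1) {z : ℝ} {n : ℕ}
    (horbit : ∀ i < n, aL ^ i * (z - (1 - aL)⁻¹) + (1 - aL)⁻¹ ≤ 0) :
    (stm aL aR)^[n] z = aL ^ n * (z - (1 - aL)⁻¹) + (1 - aL)⁻¹ := by
  have hfix : aL * (1 - aL)⁻¹ + 1 = (1 - aL)⁻¹ := by
    field_simp [sub_ne_zero.mpr haL.symm]
    ring
  induction n with
  | zero => simp
  | succ n ih =>
    rw [Function.iterate_succ_apply', ih fun i hi => horbit i (by omega),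
      stm_of_nonpos (horbit n n.lt_succ_self)]
    linear_combination hfix

end SkewTent

theorem skew_tent_upper_boundary_general (k : ℕ) (hk : 2 ≤ k) (aL aR : ℝ)
    (haL0 : 0 < aL) (haL1 : aL < 1)
    (heq : aR = -(1 - aL ^ (k - 1)) / ((1 - aL) * aL ^ (k - 2))) :
    (stm aL aR)^[k] 0 = 0 := by
  obtain ⟨n, rfl⟩ : ∃ n, k = n + 2 := ⟨k - 2, by omega⟩
  have hp : 0 < (1 - aL)⁻¹ := inv_pos.mpr (sub_pos.mpr haL1)
  have han : 0 < aL ^ n := pow_pos haL0 n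
  have hstart : aR + 1 - (1 - aL)⁻¹ = -(1 - aL)⁻¹ / aL ^ n := by
    rw [heq, show n + 2 - 1 = n + 1 by omega, show n + 2 - 2 = n by omega]
    field_simp [(sub_pos.mpr haL1).ne', han.ne']
    ring
  have horbit (i : ℕ) : aL ^ i * (aR + 1 - (1 - aL)⁻¹) + (1 - aL)⁻¹
      = (1 - aL)⁻¹ * (1 - aL ^ i / aL ^ n) := by
    rw [hstart]
    ring
  have hnonpos (i : ℕ) (hi : i < n) : (1 - aL)⁻¹ * (1 - aL ^ i / aL ^ n) ≤ 0 := by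
    have : aL ^ n ≤ aL ^ i := pow_le_pow_of_le_one haL0.le haL1.le hi.le
    exact mul_nonpos_of_nonneg_of_nonpos hp.le (by rw [sub_nonpos, le_div_iff₀ han]; linarith)
  rw [Function.iterate_add_apply, stm_iterate_two_zero,
    stm_iterate_of_left_branch haL1.ne fun i hi => (horbit i).le.trans (hnonpos i hi),
    horbit, div_self han.ne', sub_self, mul_zero]

/-- On the upper boundary curve of S_k, a_R = −(1 − a_L^{k−1})/((1 − a_L) a_L^{k−2}),
the skew tent map satisfies h^k(0) = 0. -/
theorem skew_tent_upper_boundary (k : ℕ) (hk : 2 ≤ k) (aL aR : ℝ)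
    (haL0 : 0 < aL) (haL1 : aL < 1) (haR : aR < 0)
    (heq : aR = -(1 - aL ^ (k - 1)) / ((1 - aL) * aL ^ (k - 2))) :
    (stm aL aR)^[k] 0 = 0 :=
  skew_tent_upper_boundary_general k hk aL aR haL0 haL1 heq
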